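/- Let G be a finite connected simple graph, let γ(G) denote the minimum size of a dominating set of G, and let γ_c(G) denote the minimum size of a connected dominating set of G. Let α ≥ 1, let D be a dominating set of G with |D| ≤ α · γ(G), and let C ⊆ V \ D be inclusion-minimal such that the induced subgraph G[C ∪ D] is connected. Then C ∪ D is a connected dominating set of G and |C ∪ D| ≤ 3α · γ_c(G). -/

import Mathlib

open Finset

/-- `D` is a dominating set of `G`: every vertex is in `D` or adjacent to a vertex of `D`. -/
def IsDomSet {V : Type*} (G : SimpleGraph V) (D : Finset V) : Prop :=
  ∀ v : V, v ∈ D ∨ ∃ u ∈ D, G.Adj u v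

/-- The domination number `γ(G)`: the minimum size of a dominating set of `G`. -/
noncomputable def domNum (V : Type*) [Fintype V] (G : SimpleGraph V) : ℕ :=
  sInf {k | ∃ D : Finset V, IsDomSet G D ∧ D.card = k}

/-- The connected domination number `γ_c(G)`: the minimum size of a dominating set `D`
of `G` such that the induced subgraph `G[D]` is connected. -/
noncomputable def connDomNum (V : Type*) [Fintype V] (G : SimpleGraph V) : ℕ :=
  sInf {k | ∃ D : Finset V, IsDomSet G D ∧ (G.induce (↑D : Set V)).Connected ∧ D.card = k}

section Aux

variable {V : Type*} (G : SimpleGraph V)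

/-- Reachability within an induced subgraph, as a relation on ambient vertices. -/
def IndReach (s : Set V) (a b : V) : Prop :=
  ∃ (ha : a ∈ s) (hb : b ∈ s), (G.induce s).Reachable ⟨a, ha⟩ ⟨b, hb⟩

variable {G}

lemma indReach_refl {s : Set V} {a : V} (ha : a ∈ s) : IndReach G s a a :=
  ⟨ha, ha, .refl _⟩

lemma IndReach.symm {s : Set V} {a b : V} (h : IndReach G s a b) : IndReach G s b a := by
  obtain ⟨ha, hb, h⟩ := h; exact ⟨hb, ha, h.symm⟩

lemma IndReach.trans {s : Set V} {a b c : V} (h : IndReach G s a b) (h' : IndReach G s b c) :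
    IndReach G s a c := by
  obtain ⟨ha, hb, h⟩ := h; obtain ⟨hb', hc, h'⟩ := h'
  exact ⟨ha, hc, h.trans h'⟩

lemma indReach_of_adj {s : Set V} {a b : V} (ha : a ∈ s) (hb : b ∈ s) (hab : G.Adj a b) :
    IndReach G s a b :=
  ⟨ha, hb, SimpleGraph.Adj.reachable (by simpa using hab)⟩

lemma indReach_of_walk {s t : Set V} {x y : ↥s} (w : (G.induce s).Walk x y)
    (h : ∀ v ∈ w.support, (v : V) ∈ t) : IndReach G t x y := by
  induction w with
  | nil => exact indReach_refl (h _ (by simp))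
  | @cons u m z hadj p ih =>
    refine (indReach_of_adj (h u (by simp)) (h m (by simp)) (by simpa using hadj)).trans
      (ih fun v hv => h v (by simp [hv]))

lemma IndReach.mono {s t : Set V} {a b : V} (hst : s ⊆ t) (h : IndReach G s a b) :
    IndReach G t a b := by
  obtain ⟨ha, hb, ⟨w⟩⟩ := h
  exact indReach_of_walk w fun v _ => hst v.2

lemma indReach_of_connected {s : Set V} {a b : V} (h : (G.induce s).Connected)
    (ha : a ∈ s) (hb : b ∈ s) : IndReach G s a b :=
  ⟨ha, hb, h.preconnected _ _⟩

lemma exists_unreachable {s : Set V} {a : V} (ha : a ∈ s) (h : ¬ (G.induce s).Connected) :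
    ∃ b ∈ s, ¬ IndReach G s a b := by
  by_contra hc
  push_neg at hc
  apply h
  haveI : Nonempty ↥s := ⟨⟨a, ha⟩⟩
  refine ⟨fun x y => ?_⟩
  obtain ⟨hx1, hx2, hx⟩ := hc x x.2
  obtain ⟨hy1, hy2, hy⟩ := hc y y.2
  exact hx.symm.trans hy

lemma step_aux {s t : Set V} {x y : ↥s} (w : (G.induce s).Walk x y) (hw : w.IsPath)
    (hsup : ∀ v ∈ w.support, v ≠ x → (v : V) ∈ t) (hxy : x ≠ y) :
    ∃ z : ↥s, (z : V) ∈ t ∧ (G.induce s).Adj x z ∧ IndReach G t z y := by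
  cases w with
  | nil => exact absurd rfl hxy
  | @cons _ m _ hadj p =>
    rw [SimpleGraph.Walk.cons_isPath_iff] at hw
    have hmem : ∀ v ∈ p.support, v ≠ x := fun v hv hvx => hw.2 (hvx ▸ hv)
    refine ⟨m, hsup m (by simp) (hmem m p.start_mem_support), hadj,
      indReach_of_walk p fun v hv => hsup v (by simp [hv]) (hmem v hv)⟩

lemma exists_step {s : Set V} {c y : V} (hne : c ≠ y) (h : IndReach G s c y) :
    ∃ z ∈ s \ {c}, G.Adj c z ∧ IndReach G (s \ {c}) z y := by
  classical
  obtain ⟨hc, hy, hr⟩ := h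
  obtain ⟨w⟩ := hr
  obtain ⟨z, hz, hadj, hzy⟩ := step_aux (t := s \ {c}) (x := ⟨c, hc⟩) (y := ⟨y, hy⟩) (w.toPath : (G.induce s).Walk _ _) w.toPath.2
    (fun v _ hvx => ⟨v.2, fun hvc => hvx (Subtype.ext (Set.mem_singleton_iff.mp hvc))⟩)
    (fun hh => hne (congrArg Subtype.val hh))
  exact ⟨z, hz, by simpa using hadj, hzy⟩

lemma comp_drop [Finite V] {D D' : Set V} (hsub : D ⊆ D')
    (hre : ∀ v ∈ D', ∃ d ∈ D, IndReach G D' v d)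
    {d1 d2 : V} (h1 : d1 ∈ D) (h2 : d2 ∈ D)
    (hn : ¬ IndReach G D d1 d2) (hy : IndReach G D' d1 d2) :
    Nat.card (G.induce D').ConnectedComponent + 1 ≤ Nat.card (G.induce D).ConnectedComponent := by
  classical
  let φ : G.induce D →g G.induce D' :=
    ⟨fun v => ⟨v, hsub v.2⟩, fun {a b} h => by simpa using h⟩
  let f : (G.induce D).ConnectedComponent → (G.induce D').ConnectedComponent :=
    SimpleGraph.ConnectedComponent.map φ
  have hsurj : Function.Surjective f := by
    intro c
    induction c using SimpleGraph.ConnectedComponent.ind with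
    | _ v => ?_
    obtain ⟨d, hd, hvd⟩ := hre v v.2
    obtain ⟨hv', hd', hr⟩ := hvd
    refine ⟨(G.induce D).connectedComponentMk ⟨d, hd⟩, ?_⟩
    simp only [f, SimpleGraph.ConnectedComponent.map_mk]
    rw [SimpleGraph.ConnectedComponent.eq]
    exact hr.symm
  have hninj : ¬ Function.Injective f := by
    intro hinj
    apply hn
    obtain ⟨ha, hb, hr⟩ := hy
    have h12 : f ((G.induce D).connectedComponentMk ⟨d1, h1⟩)
        = f ((G.induce D).connectedComponentMk ⟨d2, h2⟩) := by
      simp only [f, SimpleGraph.ConnectedComponent.map_mk]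
      rw [SimpleGraph.ConnectedComponent.eq]
      exact hr
    have := hinj h12
    rw [SimpleGraph.ConnectedComponent.eq] at this
    exact ⟨h1, h2, this⟩
  have := Fintype.ofFinite (G.induce D).ConnectedComponent
  have := Fintype.ofFinite (G.induce D').ConnectedComponent
  have hlt : Nat.card (G.induce D').ConnectedComponent
      < Nat.card (G.induce D).ConnectedComponent := by
    simp only [Nat.card_eq_fintype_card]
    exact Fintype.card_lt_of_surjective_not_injective f hsurj hninj
  omega

lemma comp_card_pos {s : Set V} [Finite V] (hs : s.Nonempty) :
    1 ≤ Nat.card (G.induce s).ConnectedComponent := by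
  obtain ⟨a, ha⟩ := hs
  have : Nonempty (G.induce s).ConnectedComponent :=
    ⟨(G.induce s).connectedComponentMk ⟨a, ha⟩⟩
  exact Nat.card_pos

end Aux

section KeyLemma

variable {V : Type*} [Fintype V] [DecidableEq V] {G : SimpleGraph V}

lemma key (n : ℕ) : ∀ (C D : Finset V), C.card ≤ n →
    (∀ v ∈ C, v ∉ D) →
    (∀ c ∈ C, ∃ d ∈ D, G.Adj c d) →
    (G.induce (↑(C ∪ D) : Set V)).Connected →
    (∀ C' : Finset V, C' ⊂ C → ¬ (G.induce (↑(C' ∪ D) : Set V)).Connected) →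
    C.card + 2 ≤ 2 * Nat.card (G.induce (↑D : Set V)).ConnectedComponent := by
  induction n with
  | zero =>
    intro C D hcard hdisj hadj hconn hmin
    have hC : C = ∅ := Finset.card_eq_zero.mp (Nat.le_zero.mp hcard)
    subst hC
    have hDne : D.Nonempty := by
      obtain ⟨⟨v, hv⟩⟩ := hconn.nonempty
      rw [Finset.empty_union] at hv
      exact ⟨v, Finset.mem_coe.mp hv⟩
    have := comp_card_pos (G := G) (s := (↑D : Set V)) (Finset.coe_nonempty.mpr hDne)
    have h0 : (∅ : Finset V).card = 0 := Finset.card_empty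
    omega
  | succ n ih =>
    intro C D hcard hdisj hadj hconn hmin
    rcases C.eq_empty_or_nonempty with rfl | ⟨c1, hc1⟩
    · have hDne : D.Nonempty := by
        obtain ⟨⟨v, hv⟩⟩ := hconn.nonempty
        rw [Finset.empty_union] at hv
        exact ⟨v, Finset.mem_coe.mp hv⟩
      have := comp_card_pos (G := G) (s := (↑D : Set V)) (Finset.coe_nonempty.mpr hDne)
      have h0 : (∅ : Finset V).card = 0 := Finset.card_empty
      omega
    · obtain ⟨d1, hd1D, had1⟩ := hadj c1 hc1
      have hc1D : c1 ∉ D := hdisj c1 hc1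
      by_cases hA : ∃ d2 ∈ D, G.Adj c1 d2 ∧ ¬ IndReach G (↑D : Set V) d1 d2
      · -- Case A : c1 joins two components of G[D]
        obtain ⟨d2, hd2D, had2, hnr⟩ := hA
        set D' : Finset V := insert c1 D with hD'
        have hc1D' : c1 ∈ D' := Finset.mem_insert_self _ _
        have hsub : (↑D : Set V) ⊆ (↑D' : Set V) := by
          intro x hx; simp only [hD', Finset.coe_insert, Set.mem_insert_iff]
          exact Or.inr hx
        have hdrop := comp_drop (G := G) hsub
          (fun v hv => by
            simp only [hD', Finset.coe_insert, Set.mem_insert_iff, Finset.mem_coe] at hv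
            rcases hv with rfl | hv
            · exact ⟨d1, Finset.mem_coe.mpr hd1D,
                indReach_of_adj (by simp [hD']) (by simp [hD', hd1D]) had1⟩
            · exact ⟨v, Finset.mem_coe.mpr hv, indReach_refl (by simp [hD', hv])⟩)
          (Finset.mem_coe.mpr hd1D) (Finset.mem_coe.mpr hd2D) hnr
          ((indReach_of_adj (by simp [hD', hd1D]) (by simp [hD']) had1.symm).trans
            (indReach_of_adj (by simp [hD']) (by simp [hD', hd2D]) had2))
        have hset : (C.erase c1) ∪ D' = C ∪ D := by
          ext x
          by_cases hx : x = c1 <;>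
            simp [hD', Finset.mem_erase, Finset.mem_insert, hx, hc1] <;> tauto
        have hIH := ih (C.erase c1) D'
          (by have := Finset.card_erase_add_one hc1; omega)
          (fun v hv => by
            simp only [Finset.mem_erase] at hv
            simp only [hD', Finset.mem_insert, not_or]
            exact ⟨hv.1, hdisj v hv.2⟩)
          (fun c hc => by
            obtain ⟨d, hd, hcd⟩ := hadj c (Finset.mem_of_mem_erase hc)
            exact ⟨d, Finset.mem_insert_of_mem hd, hcd⟩)
          (by rw [hset]; exact hconn)
          (fun C' hC' => by
            have hset2 : C' ∪ D' = (insert c1 C') ∪ D := by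
              ext x; simp only [Finset.mem_union, Finset.mem_insert, hD']; tauto
            rw [hset2]
            apply hmin
            have hss : insert c1 C' ⊆ C :=
              Finset.insert_subset hc1 (hC'.subset.trans (Finset.erase_subset _ _))
            obtain ⟨x, hxC, hxn⟩ := Finset.exists_of_ssubset hC'
            rw [Finset.mem_erase] at hxC
            exact (Finset.ssubset_iff_of_subset hss).mpr
              ⟨x, hxC.2, by simp [Finset.mem_insert, hxC.1, hxn]⟩)
        have hce := Finset.card_erase_add_one hc1
        omega
      · -- Case B
        push_neg at hA
        set S : Finset V := C ∪ D with hS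
        have hS' : (C.erase c1) ∪ D = S.erase c1 := by
          ext x
          simp only [Finset.mem_union, Finset.mem_erase, hS]
          constructor
          · rintro (⟨hx, hxC⟩ | hxD)
            · exact ⟨hx, Or.inl hxC⟩
            · exact ⟨fun h => hc1D (h ▸ hxD), Or.inr hxD⟩
          · rintro ⟨hx, hxC | hxD⟩
            · exact Or.inl ⟨hx, hxC⟩
            · exact Or.inr hxD
        have hnc : ¬ (G.induce (↑(S.erase c1) : Set V)).Connected := by
          rw [← hS']; exact hmin (C.erase c1) (Finset.erase_ssubset hc1)
        have hd1ne : d1 ≠ c1 := fun h => hc1D (h ▸ hd1D)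
        have hd1S' : d1 ∈ (↑(S.erase c1) : Set V) := by
          simp [Finset.mem_erase, hd1ne, hS, hd1D]
        obtain ⟨y, hyS', hny⟩ := exists_unreachable hd1S' hnc
        have hyS : y ∈ (↑S : Set V) := by
          simp only [Finset.mem_coe, Finset.coe_erase, Set.mem_diff] at hyS'
          exact hyS'.1
        have hyne : c1 ≠ y := by
          simp only [Finset.mem_coe, Finset.coe_erase, Set.mem_diff,
            Set.mem_singleton_iff] at hyS'
          exact fun h => hyS'.2 h.symm
        have hc1S : c1 ∈ (↑S : Set V) := by simp [hS, hc1]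
        obtain ⟨c2, hc2mem, hadj12, hreach2y⟩ :=
          exists_step hyne (indReach_of_connected hconn hc1S hyS)
        rw [← Finset.coe_erase] at hc2mem hreach2y
        have hc2S : c2 ∈ S := Finset.mem_of_mem_erase (by exact_mod_cast hc2mem)
        have hDsub : (↑D : Set V) ⊆ (↑(S.erase c1) : Set V) := by
          intro x hx
          simp only [Finset.mem_coe] at hx ⊢
          exact Finset.mem_erase.mpr ⟨fun h => hc1D (h ▸ hx), Finset.mem_union_right _ hx⟩
        have hc2C : c2 ∈ C := by
          rcases Finset.mem_union.mp hc2S with h | h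
          · exact h
          · exfalso
            exact hny (((hA c2 h hadj12).mono hDsub).trans hreach2y)
        obtain ⟨d2, hd2D, had2⟩ := hadj c2 hc2C
        have hnr : ¬ IndReach G (↑D : Set V) d1 d2 := by
          intro h
          have hc2S' : c2 ∈ (↑(S.erase c1) : Set V) := by exact_mod_cast hc2mem
          exact hny ((h.mono hDsub).trans
            ((indReach_of_adj (hDsub (Finset.mem_coe.mpr hd2D)) hc2S' had2.symm).trans hreach2y))
        have hc12 : c1 ≠ c2 := hadj12.ne
        set D' : Finset V := insert c1 (insert c2 D) with hD'
        have hsub : (↑D : Set V) ⊆ (↑D' : Set V) := by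
          intro x hx
          simp only [hD', Finset.coe_insert, Set.mem_insert_iff]
          exact Or.inr (Or.inr hx)
        have hc1D' : c1 ∈ (↑D' : Set V) := by simp [hD']
        have hc2D' : c2 ∈ (↑D' : Set V) := by simp [hD']
        have hdrop := comp_drop (G := G) hsub
          (fun v hv => by
            simp only [hD', Finset.coe_insert, Set.mem_insert_iff, Finset.mem_coe] at hv
            rcases hv with rfl | rfl | hv
            · exact ⟨d1, Finset.mem_coe.mpr hd1D, indReach_of_adj hc1D' (hsub (Finset.mem_coe.mpr hd1D)) had1⟩
            · exact ⟨d2, Finset.mem_coe.mpr hd2D, indReach_of_adj hc2D' (hsub (Finset.mem_coe.mpr hd2D)) had2⟩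
            · exact ⟨v, Finset.mem_coe.mpr hv, indReach_refl (hsub (by simpa using hv))⟩)
          (Finset.mem_coe.mpr hd1D) (Finset.mem_coe.mpr hd2D) hnr
          (((indReach_of_adj (hsub (Finset.mem_coe.mpr hd1D)) hc1D' had1.symm).trans
            (indReach_of_adj hc1D' hc2D' hadj12)).trans
            (indReach_of_adj hc2D' (hsub (Finset.mem_coe.mpr hd2D)) had2))
        have hc2e : c2 ∈ C.erase c1 := Finset.mem_erase.mpr ⟨hc12.symm, hc2C⟩
        have hce1 := Finset.card_erase_add_one hc1
        have hce2 := Finset.card_erase_add_one hc2e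
        set C'' : Finset V := (C.erase c1).erase c2 with hC''
        have hsetC : C'' ∪ D' = C ∪ D := by
          ext x
          by_cases hx1 : x = c1
          · simp [hC'', hD', hx1, hc1]
          · by_cases hx2 : x = c2
            · simp [hC'', hD', hx2, hc2C, hc12.symm]
            · simp [hC'', hD', Finset.mem_erase, hx1, hx2]
        have hIH := ih C'' D'
          (by omega)
          (fun v hv => by
            simp only [hC'', Finset.mem_erase] at hv
            simp only [hD', Finset.mem_insert, not_or]
            exact ⟨hv.2.1, hv.1, hdisj v hv.2.2⟩)
          (fun c hc => by
            obtain ⟨d, hd, hcd⟩ := hadj c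
              (Finset.mem_of_mem_erase (Finset.mem_of_mem_erase hc))
            exact ⟨d, by simp [hD', hd], hcd⟩)
          (by rw [hsetC]; exact hconn)
          (fun C' hC' => by
            have hset2 : C' ∪ D' = (insert c1 (insert c2 C')) ∪ D := by
              ext x; simp only [Finset.mem_union, Finset.mem_insert, hD']; tauto
            rw [hset2]
            apply hmin
            have hss : insert c1 (insert c2 C') ⊆ C := by
              refine Finset.insert_subset hc1 (Finset.insert_subset hc2C ?_)
              exact hC'.subset.trans ((Finset.erase_subset _ _).trans (Finset.erase_subset _ _))
            obtain ⟨x, hxC, hxn⟩ := Finset.exists_of_ssubset hC'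
            simp only [hC'', Finset.mem_erase] at hxC
            exact (Finset.ssubset_iff_of_subset hss).mpr
              ⟨x, hxC.2.2, by simp [Finset.mem_insert, hxC.1, hxC.2.1, hxn]⟩)
        omega

end KeyLemma

theorem stmt13 {V : Type*} [Fintype V] [DecidableEq V] (G : SimpleGraph V)
    (hG : G.Connected)
    (α : ℝ) (hα : 1 ≤ α) (D C : Finset V)
    -- `D` is a dominating set of `G` with `|D| ≤ α·γ(G)`
    (hD : IsDomSet G D)
    (hDα : (D.card : ℝ) ≤ α * (domNum V G : ℝ))
    -- `C ⊆ V \ D`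
    (hCD : ∀ v ∈ C, v ∉ D)
    -- `C` is inclusion-minimal such that `G[C ∪ D]` is connected
    (hconn : (G.induce (↑(C ∪ D) : Set V)).Connected)
    (hmin : ∀ C' : Finset V, C' ⊂ C → ¬ (G.induce (↑(C' ∪ D) : Set V)).Connected) :
    -- then `C ∪ D` is a connected dominating set with `|C ∪ D| ≤ 3α·γ_c(G)`
    IsDomSet G (C ∪ D) ∧ (G.induce (↑(C ∪ D) : Set V)).Connected ∧
      ((C ∪ D).card : ℝ) ≤ 3 * α * (connDomNum V G : ℝ) := by
  classical
  refine ⟨?_, hconn, ?_⟩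
  · intro v
    rcases hD v with h | ⟨u, hu, h⟩
    · exact Or.inl (Finset.mem_union_right _ h)
    · exact Or.inr ⟨u, Finset.mem_union_right _ hu, h⟩
  · have hadjC : ∀ c ∈ C, ∃ d ∈ D, G.Adj c d := by
      intro c hc
      rcases hD c with h | ⟨u, hu, h⟩
      · exact absurd h (hCD c hc)
      · exact ⟨u, hu, h.symm⟩
    have hkey := key (G := G) C.card C D le_rfl hCD hadjC hconn hmin
    have hkD : Nat.card (G.induce (↑D : Set V)).ConnectedComponent ≤ D.card := by
      have hsur : Function.Surjective
          ((G.induce (↑D : Set V)).connectedComponentMk) := fun c => c.exists_rep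
      have h := Nat.card_le_card_of_surjective _ hsur
      rwa [Nat.card_coe_set_eq, Set.ncard_coe_finset] at h
    have hdisj : Disjoint C D := Finset.disjoint_left.mpr hCD
    have hcu : (C ∪ D).card = C.card + D.card := Finset.card_union_of_disjoint hdisj
    have hcard : (C ∪ D).card ≤ 3 * D.card := by omega
    have hgam : domNum V G ≤ connDomNum V G := by
      have hne : {k | ∃ Dc : Finset V, IsDomSet G Dc ∧
          (G.induce (↑Dc : Set V)).Connected ∧ Dc.card = k}.Nonempty := by
        refine ⟨(Finset.univ : Finset V).card, Finset.univ,
          fun v => Or.inl (Finset.mem_univ v), ?_, rfl⟩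
        rw [Finset.coe_univ]
        exact (SimpleGraph.induceUnivIso G).connected_iff.mpr hG
      obtain ⟨Dc, hdom, _, hcardc⟩ := Nat.sInf_mem hne
      exact Nat.sInf_le ⟨Dc, hdom, hcardc⟩
    have h1 : ((C ∪ D).card : ℝ) ≤ 3 * (D.card : ℝ) := by exact_mod_cast hcard
    have h2 : (domNum V G : ℝ) ≤ (connDomNum V G : ℝ) := by exact_mod_cast hgam
    have h3 : (0:ℝ) ≤ α := le_trans zero_le_one hα
    have h4 : (0:ℝ) ≤ (domNum V G : ℝ) := Nat.cast_nonneg _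
    calc ((C ∪ D).card : ℝ) ≤ 3 * (D.card : ℝ) := h1
      _ ≤ 3 * (α * (domNum V G : ℝ)) := by linarith
      _ = 3 * α * (domNum V G : ℝ) := by ring
      _ ≤ 3 * α * (connDomNum V G : ℝ) := by nlinarith
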